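/- arXiv:q-alg/9608016 — 2 statements merged into one kernel-verified Lean document; each statement's English description precedes it below -/
import Mathlib

section
/- Let G be a finite group and let L be a ℂ-subspace of the augmentation ideal of ℂ[G] that is invariant under conjugation by every h ∈ G and invariant under D_a for every function a : G → ℂ. Then there is a unique subset S ⊆ G \ {1} that is closed under conjugation such that L = span_ℂ{ x_g : g ∈ S }. -/
open MonoidAlgebra

noncomputable section

variable {G : Type*} [Group G] [Fintype G]

/-- The augmentation map `ε : ℂ[G] → ℂ`, the algebra map sending each group element to `1`. -/
def aug (G : Type*) [Group G] : MonoidAlgebra ℂ G →ₐ[ℂ] ℂ :=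
  MonoidAlgebra.lift ℂ ℂ G 1

/-- `x_g := g - 1` in the group algebra. -/
def xElt (g : G) : MonoidAlgebra ℂ G :=
  MonoidAlgebra.of ℂ G g - 1

/-- The linear endomorphism `D_a` of `ℂ[G]` with `D_a(g) = a(g)·g - a(g)·1` on basis elements. -/
def Dop (a : G → ℂ) : MonoidAlgebra ℂ G →ₗ[ℂ] MonoidAlgebra ℂ G :=
  (Finsupp.lsum ℂ fun g => LinearMap.toSpanSingleton ℂ _ (a g • xElt g)) ∘ₗ
    (MonoidAlgebra.coeffLinearEquiv ℂ).toLinearMap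

/-! The subset is forced to be `S = {g ≠ 1 | x_g ∈ L}`: the coefficient of `g ≠ 1` in a combination
of the `x_s` vanishes unless `g` is one of the `s`. It spans `L` because an element `y` of the
augmentation ideal is `∑ y_g x_g`, and `D_a` for `a` the indicator of `g` cuts `y` down to `y_g x_g`,
so every `x_g` with `y_g ≠ 0` lies in `L`. Conjugation invariance of `L` transports to `S` through
`h x_g h⁻¹ = x_{hgh⁻¹}`. -/

section

omit [Fintype G]

lemma xElt_one : (xElt 1 : MonoidAlgebra ℂ G) = 0 := by
  simp [xElt, one_def]

lemma coeff_xElt_of_ne_one [DecidableEq G] {g : G} (hg : g ≠ 1) (h : G) :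
    (xElt h).coeff g = if h = g then 1 else 0 := by
  simp [xElt, one_def, of_apply, Finsupp.single_apply, hg.symm]

lemma conj_xElt (h g : G) :
    of ℂ G h * xElt g * of ℂ G h⁻¹ = xElt (h * g * h⁻¹) := by
  simp [xElt, mul_sub, sub_mul, one_def]

lemma sum_coeff_smul_xElt (y : MonoidAlgebra ℂ G) :
    y.coeff.sum (fun g c => c • xElt g) = y - aug G y • 1 := by
  have hof : (y.coeff.sum fun g c => c • of ℂ G g) = y := by
    simp [of_apply, smul_single]
  have haug : aug G y = y.coeff.sum fun _ c => c := by
    simp [aug, lift_apply]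
  calc y.coeff.sum (fun g c => c • xElt g)
      = (y.coeff.sum fun g c => c • of ℂ G g) - (y.coeff.sum fun _ c => c) • 1 := by
        simp only [xElt, smul_sub, Finsupp.sum, Finset.sum_sub_distrib, Finset.sum_smul]
    _ = y - aug G y • 1 := by rw [hof, haug]

lemma Dop_apply (a : G → ℂ) (y : MonoidAlgebra ℂ G) :
    Dop a y = y.coeff.sum fun g c => c • a g • xElt g :=
  rfl

lemma Dop_single [DecidableEq G] (g : G) (y : MonoidAlgebra ℂ G) :
    Dop (Pi.single g 1) y = y.coeff g • xElt g := by
  rw [Dop_apply, Finsupp.sum_eq_single g]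
  · simp
  · intro h _ hne
    simp [hne]
  · simp

lemma coeff_eq_zero_of_mem_span_xElt_image {S : Set G} {g : G} (hg : g ≠ 1) (hgS : g ∉ S)
    {y : MonoidAlgebra ℂ G} (hy : y ∈ Submodule.span ℂ (xElt '' S)) : y.coeff g = 0 := by
  classical
  induction hy using Submodule.span_induction with
  | mem x hx =>
    obtain ⟨h, hh, rfl⟩ := hx
    rw [coeff_xElt_of_ne_one hg, if_neg (ne_of_mem_of_not_mem hh hgS)]
  | zero => simp
  | add u v _ _ hu hv => simp [hu, hv]
  | smul c u _ hu => simp [hu]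

lemma eq_setOf_xElt_mem_span {S : Set G} (hS : S ⊆ {g | g ≠ 1}) :
    S = {g | g ≠ 1 ∧ xElt g ∈ Submodule.span ℂ (xElt '' S)} := by
  classical
  ext g
  refine ⟨fun hg => ⟨hS hg, Submodule.subset_span ⟨g, hg, rfl⟩⟩, fun ⟨hg1, hgS⟩ => ?_⟩
  by_contra hgS'
  simpa [coeff_xElt_of_ne_one hg1] using coeff_eq_zero_of_mem_span_xElt_image hg1 hgS' hgS

variable {L : Submodule ℂ (MonoidAlgebra ℂ G)}

lemma coeff_smul_xElt_mem (hD : ∀ a : G → ℂ, ∀ y ∈ L, Dop a y ∈ L) {y : MonoidAlgebra ℂ G}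
    (hy : y ∈ L) (g : G) : y.coeff g • xElt g ∈ L := by
  classical
  simpa [Dop_single] using hD (Pi.single g 1) y hy

lemma eq_span_xElt_image_setOf (haug : ∀ y ∈ L, aug G y = 0)
    (hD : ∀ a : G → ℂ, ∀ y ∈ L, Dop a y ∈ L) :
    L = Submodule.span ℂ (xElt '' {g | g ≠ 1 ∧ xElt g ∈ L}) := by
  refine le_antisymm (fun y hy => ?_) (Submodule.span_le.mpr ?_)
  · have hy_sum : y = y.coeff.sum (fun g c => c • xElt g) := by
      rw [sum_coeff_smul_xElt, haug y hy, zero_smul, sub_zero]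
    rw [hy_sum]
    refine Submodule.finsuppSum_mem _ _ _ _ fun g hg => ?_
    obtain rfl | hg1 := eq_or_ne g 1
    · simp [xElt_one]
    have hgL : xElt g ∈ L :=
      (L.smul_mem_iff hg).mp (coeff_smul_xElt_mem hD hy g)
    exact Submodule.smul_mem _ _ (Submodule.subset_span ⟨g, ⟨hg1, hgL⟩, rfl⟩)
  · rintro _ ⟨g, ⟨-, hgL⟩, rfl⟩
    exact hgL

end

theorem stmt1 (L : Submodule ℂ (MonoidAlgebra ℂ G))
    (haug : ∀ y ∈ L, aug G y = 0)
    (hconj : ∀ h : G, ∀ y ∈ L, MonoidAlgebra.of ℂ G h * y * MonoidAlgebra.of ℂ G h⁻¹ ∈ L)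
    (hD : ∀ a : G → ℂ, ∀ y ∈ L, Dop a y ∈ L) :
    ∃! S : Set G, S ⊆ {g : G | g ≠ 1} ∧ (∀ g ∈ S, ∀ h : G, h * g * h⁻¹ ∈ S) ∧
      L = Submodule.span ℂ (xElt '' S) := by
  refine ⟨{g | g ≠ 1 ∧ xElt g ∈ L}, ⟨fun g hg => hg.1, ?_, eq_span_xElt_image_setOf haug hD⟩, ?_⟩
  · rintro g ⟨hg1, hgL⟩ h
    exact ⟨conj_eq_one_iff.not.mpr hg1, conj_xElt h g ▸ hconj h _ hgL⟩
  · rintro S ⟨hS, -, rfl⟩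
    exact eq_setOf_xElt_mem_span hS

end
end

section
/- Let H be a Hopf algebra over a commutative ring and let c ∈ H be a central element. Then for every h ∈ H the following identity holds in H ⊗ H: Σ c₍₁₎ ⊗ h₍₁₎ c₍₂₎ S(h₍₂₎) = Σ S(h₍₁₎) c₍₁₎ h₍₂₎ ⊗ c₍₂₎. -/
/-!
Put `x = Δc`. The left side equals `Σ (1 ⊗ h₁) x (1 ⊗ S h₂)` and the right side
`Σ (S h₁ ⊗ 1) x (h₂ ⊗ 1)`. Since `c` is central and `Δ` is multiplicative, `x` commutes with every
`Δv`. Inserting `Σ (S v₁ ⊗ 1) Δv₂ = 1 ⊗ v` on the left and `Σ Δv₁ (1 ⊗ S v₂) = v ⊗ 1` on the right,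
both sides become `Σ (S h₁ ⊗ 1) Δh₂ x (1 ⊗ S h₃)`, under the two bracketings of `Δ²h` that
coassociativity identifies.
-/

open TensorProduct Coalgebra HopfAlgebra

noncomputable section

variable (R : Type*) (H : Type*) [CommRing R] [Ring H] [HopfAlgebra R H]

/-- The left adjoint action as a linear map `H ⊗ H → H`, `h ⊗ x ↦ Σ h₍₁₎ x S(h₍₂₎)`. -/
def adMap : H ⊗[R] H →ₗ[R] H :=
  LinearMap.mul' R H ∘ₗ
  LinearMap.lTensor H (LinearMap.mul' R H) ∘ₗ
  LinearMap.lTensor H (TensorProduct.comm R H H).toLinearMap ∘ₗ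
  LinearMap.lTensor H (LinearMap.rTensor H (antipode (R := R))) ∘ₗ
  (TensorProduct.assoc R H H H).toLinearMap ∘ₗ
  LinearMap.rTensor H (comul : H →ₗ[R] H ⊗[R] H)

/-- The "right-handed" adjoint-type map `H ⊗ H → H`, `h ⊗ x ↦ Σ S(h₍₁₎) x h₍₂₎`. -/
def adRMap : H ⊗[R] H →ₗ[R] H :=
  LinearMap.mul' R H ∘ₗ
  LinearMap.lTensor H (LinearMap.mul' R H) ∘ₗ
  LinearMap.rTensor (H ⊗[R] H) (antipode (R := R)) ∘ₗ
  LinearMap.lTensor H (TensorProduct.comm R H H).toLinearMap ∘ₗ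
  (TensorProduct.assoc R H H H).toLinearMap ∘ₗ
  LinearMap.rTensor H (comul : H →ₗ[R] H ⊗[R] H)

variable {R H}

namespace Coalgebra

variable {S C ι : Type*} [CommSemiring S] [AddCommMonoid C] [Module S C] [Coalgebra S C] {c : C}

lemma sum_smul_counit (𝓡 : Repr S c ι) :
    ∑ i ∈ 𝓡.index, counit (R := S) (𝓡.right i) • 𝓡.left i = c := by
  simpa only [map_sum, rid_tmul, one_smul] using
    congrArg (_root_.TensorProduct.rid S C) (sum_tmul_counit_eq 𝓡)

end Coalgebra

namespace HopfAlgebra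

variable {S A ι : Type*} [CommSemiring S] [Semiring A] [HopfAlgebra S A]

lemma sum_antipode_tmul_one_mul_comul {v : A} (𝓡 : Repr S v ι) :
    ∑ i ∈ 𝓡.index, (antipode S (𝓡.left i) ⊗ₜ[S] (1 : A)) * comul (𝓡.right i) =
      (1 : A) ⊗ₜ[S] v := by
  have hcoassoc := congr((LinearMap.rTensor A (LinearMap.mul' S A ∘ₗ (antipode S).rTensor A))
      ((TensorProduct.assoc S A A A).symm $(sum_tmul_tmul_eq 𝓡 (fun i ↦ ℛ S (𝓡.left i))
        (fun i ↦ ℛ S (𝓡.right i)))))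
  simp only [map_sum, assoc_symm_tmul, LinearMap.rTensor_tmul, LinearMap.comp_apply,
    LinearMap.mul'_apply, ← sum_tmul, sum_antipode_mul_eq_smul] at hcoassoc
  calc ∑ i ∈ 𝓡.index, (antipode S (𝓡.left i) ⊗ₜ[S] (1 : A)) * comul (𝓡.right i)
      = ∑ i ∈ 𝓡.index, (counit (R := S) (𝓡.left i) • (1 : A)) ⊗ₜ[S] 𝓡.right i := by
        rw [hcoassoc]
        refine Finset.sum_congr rfl fun i _ ↦ ?_
        rw [← (ℛ S (𝓡.right i)).eq, Finset.mul_sum]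
        simp only [Algebra.TensorProduct.tmul_mul_tmul, one_mul]
    _ = (1 : A) ⊗ₜ[S] v := by
        simp only [smul_tmul, ← tmul_sum, sum_counit_smul]

lemma sum_comul_mul_one_tmul_antipode {v : A} (𝓡 : Repr S v ι) :
    ∑ i ∈ 𝓡.index, comul (𝓡.left i) * ((1 : A) ⊗ₜ[S] antipode S (𝓡.right i)) =
      v ⊗ₜ[S] (1 : A) := by
  have hcoassoc := congr((LinearMap.lTensor A (LinearMap.mul' S A ∘ₗ (antipode S).lTensor A))
      $(sum_tmul_tmul_eq 𝓡 (fun i ↦ ℛ S (𝓡.left i)) (fun i ↦ ℛ S (𝓡.right i))))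
  simp only [map_sum, LinearMap.lTensor_tmul, LinearMap.comp_apply,
    LinearMap.mul'_apply, ← tmul_sum, sum_mul_antipode_eq_smul] at hcoassoc
  calc ∑ i ∈ 𝓡.index, comul (𝓡.left i) * ((1 : A) ⊗ₜ[S] antipode S (𝓡.right i))
      = ∑ i ∈ 𝓡.index, 𝓡.left i ⊗ₜ[S] (counit (R := S) (𝓡.right i) • (1 : A)) := by
        rw [← hcoassoc]
        refine Finset.sum_congr rfl fun i _ ↦ ?_
        rw [← (ℛ S (𝓡.left i)).eq, Finset.sum_mul]
        simp only [Algebra.TensorProduct.tmul_mul_tmul, mul_one]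
    _ = v ⊗ₜ[S] (1 : A) := by
        simp only [tmul_smul, smul_tmul', ← sum_tmul, sum_smul_counit]

theorem sum_one_tmul_mul_mul_one_tmul_antipode_of_commute {x : A ⊗[S] A}
    (hx : ∀ v, Commute x (comul v))
    {h : A} (𝓡 : Repr S h ι) :
    ∑ i ∈ 𝓡.index, ((1 : A) ⊗ₜ[S] 𝓡.left i) * x * ((1 : A) ⊗ₜ[S] antipode S (𝓡.right i)) =
      ∑ i ∈ 𝓡.index, (antipode S (𝓡.left i) ⊗ₜ[S] (1 : A)) * x * (𝓡.right i ⊗ₜ[S] (1 : A)) := by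
  let Θ : A ⊗[S] (A ⊗[S] A) →ₗ[S] A ⊗[S] A :=
    LinearMap.mul' S (A ⊗[S] A) ∘ₗ TensorProduct.map
      ((Algebra.TensorProduct.includeLeft : A →ₐ[S] A ⊗[S] A).toLinearMap ∘ₗ antipode S)
      (LinearMap.mul' S (A ⊗[S] A) ∘ₗ TensorProduct.map
        (LinearMap.mulRight S x ∘ₗ comul)
        ((Algebra.TensorProduct.includeRight : A →ₐ[S] A ⊗[S] A).toLinearMap ∘ₗ antipode S))
  have hΘ (u v w : A) : Θ (u ⊗ₜ (v ⊗ₜ w)) =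
      (antipode S u ⊗ₜ[S] (1 : A)) * comul v * x * ((1 : A) ⊗ₜ[S] antipode S w) := by
    simp [Θ, mul_assoc]
  have hcoassoc := congr(Θ $(sum_tmul_tmul_eq 𝓡 (fun i ↦ ℛ S (𝓡.left i))
      (fun i ↦ ℛ S (𝓡.right i))))
  simp only [map_sum, hΘ] at hcoassoc
  calc ∑ i ∈ 𝓡.index, ((1 : A) ⊗ₜ[S] 𝓡.left i) * x * ((1 : A) ⊗ₜ[S] antipode S (𝓡.right i))
      = ∑ i ∈ 𝓡.index, (∑ j ∈ (ℛ S (𝓡.left i)).index,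
          (antipode S ((ℛ S (𝓡.left i)).left j) ⊗ₜ[S] (1 : A)) *
            comul ((ℛ S (𝓡.left i)).right j)) * x * ((1 : A) ⊗ₜ[S] antipode S (𝓡.right i)) := by
        simp only [sum_antipode_tmul_one_mul_comul]
    _ = ∑ i ∈ 𝓡.index, (antipode S (𝓡.left i) ⊗ₜ[S] (1 : A)) * x *
          ∑ j ∈ (ℛ S (𝓡.right i)).index, comul ((ℛ S (𝓡.right i)).left j) *
            ((1 : A) ⊗ₜ[S] antipode S ((ℛ S (𝓡.right i)).right j)) := by
        simp only [Finset.sum_mul, hcoassoc]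
        refine Finset.sum_congr rfl fun i _ ↦ ?_
        rw [Finset.mul_sum]
        refine Finset.sum_congr rfl fun j _ ↦ ?_
        rw [mul_assoc _ (comul _) x, ← (hx _).eq]
        simp only [mul_assoc]
    _ = ∑ i ∈ 𝓡.index, (antipode S (𝓡.left i) ⊗ₜ[S] (1 : A)) * x * (𝓡.right i ⊗ₜ[S] (1 : A)) := by
        simp only [sum_comul_mul_one_tmul_antipode]

end HopfAlgebra

section

variable {ι : Type*} {h : H}

lemma adMap_tmul (𝓡 : Repr R h ι) (y : H) :
    adMap R H (h ⊗ₜ y) = ∑ i ∈ 𝓡.index, 𝓡.left i * y * antipode R (𝓡.right i) := by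
  simp [adMap, ← 𝓡.eq, sum_tmul, mul_assoc]

lemma adRMap_tmul (𝓡 : Repr R h ι) (y : H) :
    adRMap R H (h ⊗ₜ y) = ∑ i ∈ 𝓡.index, antipode R (𝓡.left i) * y * 𝓡.right i := by
  simp [adRMap, ← 𝓡.eq, sum_tmul, mul_assoc]

lemma lTensor_adMap_comp_mk_apply (𝓡 : Repr R h ι) (x : H ⊗[R] H) :
    LinearMap.lTensor H (adMap R H ∘ₗ TensorProduct.mk R H H h) x =
      ∑ i ∈ 𝓡.index, ((1 : H) ⊗ₜ[R] 𝓡.left i) * x * ((1 : H) ⊗ₜ[R] antipode R (𝓡.right i)) := by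
  induction x using TensorProduct.induction_on with
  | zero => simp
  | tmul a y =>
    simp [adMap_tmul 𝓡, tmul_sum, Algebra.TensorProduct.tmul_mul_tmul]
  | add x y hx hy => simp [hx, hy, mul_add, add_mul, Finset.sum_add_distrib]

lemma rTensor_adRMap_comp_mk_apply (𝓡 : Repr R h ι) (x : H ⊗[R] H) :
    LinearMap.rTensor H (adRMap R H ∘ₗ TensorProduct.mk R H H h) x =
      ∑ i ∈ 𝓡.index, (antipode R (𝓡.left i) ⊗ₜ[R] (1 : H)) * x * (𝓡.right i ⊗ₜ[R] (1 : H)) := by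
  induction x using TensorProduct.induction_on with
  | zero => simp
  | tmul y b =>
    simp [adRMap_tmul 𝓡, sum_tmul, Algebra.TensorProduct.tmul_mul_tmul]
  | add x y hx hy => simp [hx, hy, mul_add, add_mul, Finset.sum_add_distrib]

end

/-- For `c` central and any `h`:
`Σ c₍₁₎ ⊗ h₍₁₎ c₍₂₎ S(h₍₂₎) = Σ S(h₍₁₎) c₍₁₎ h₍₂₎ ⊗ c₍₂₎` in `H ⊗ H`. -/
theorem stmt13 (c : H) (hc : ∀ x : H, c * x = x * c) (h : H) :
    LinearMap.lTensor H (adMap R H ∘ₗ TensorProduct.mk R H H h)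
        ((comul : H →ₗ[R] H ⊗[R] H) c) =
    LinearMap.rTensor H (adRMap R H ∘ₗ TensorProduct.mk R H H h)
        ((comul : H →ₗ[R] H ⊗[R] H) c) := by
  have hcomul (v : H) : Commute (comul (R := R) c) (comul v) :=
    (show Commute c v from hc v).map (Bialgebra.comulAlgHom R H)
  rw [lTensor_adMap_comp_mk_apply (ℛ R h), rTensor_adRMap_comp_mk_apply (ℛ R h)]
  exact sum_one_tmul_mul_mul_one_tmul_antipode_of_commute hcomul (ℛ R h)

end
end
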